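/- arXiv:1705.05020 — 4 statements merged into one kernel-verified Lean document; each statement's English description precedes it below -/
import Mathlib

section
/- Let f : ℝ^n → ℝ be differentiable with L-Lipschitz gradient, K ∈ ℝ^{n×n} with σ_min(KᵀK) = σ > 0, and suppose at iterates α, α' ∈ ℝ^n, λ, λ' ∈ ℝ^n one has -∇f(α) = Kᵀλ and -∇f(α') = Kᵀλ'. Then ‖λ - λ'‖² ≤ (L²/σ)‖α - α'‖². -/
/-!
Since `Kᵀ (λ - λ') = ∇f α' - ∇f α`, it suffices to show `σ ‖y‖² ≤ ‖Kᵀ y‖²`. This is the Rayleigh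
bound for `K Kᵀ`, whose spectrum is that of `Kᵀ K` because the two products have the same
characteristic polynomial; the Lipschitz bound on the gradient then gives
`σ ‖λ - λ'‖² ≤ L² ‖α - α'‖²`.
-/

open Matrix RealInnerProductSpace

open scoped MatrixOrder in
theorem Matrix.IsHermitian.mul_norm_sq_le_inner_toEuclideanLin {n : Type*} [Fintype n]
    [DecidableEq n] {A : Matrix n n ℝ} (hA : A.IsHermitian) {σ : ℝ}
    (hσ : ∀ μ ∈ spectrum ℝ A, σ ≤ μ) (x : EuclideanSpace ℝ n) :
    σ * ‖x‖ ^ 2 ≤ ⟪x, toEuclideanLin A x⟫ := by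
  have hpsd : (A - σ • 1).PosSemidef := by
    simpa only [Matrix.le_iff, Algebra.algebraMap_eq_smul_one] using
      (algebraMap_le_iff_le_spectrum hA.isSelfAdjoint).2 hσ
  have := hpsd.dotProduct_mulVec_nonneg x.ofLp
  rw [← real_inner_self_eq_norm_sq]
  simp only [EuclideanSpace.inner_eq_star_dotProduct, toLpLin_apply, sub_mulVec,
    smul_mulVec, one_mulVec, dotProduct_sub, dotProduct_smul, smul_eq_mul, star_trivial] at this ⊢
  linarith [dotProduct_comm x.ofLp (A *ᵥ x.ofLp)]

theorem Matrix.spectrum_mul_comm {K n : Type*} [Field K] [Fintype n] [DecidableEq n]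
    (A B : Matrix n n K) : spectrum K (A * B) = spectrum K (B * A) := by
  ext μ
  simp only [mem_spectrum_iff_isRoot_charpoly, charpoly_mul_comm]

theorem Matrix.norm_toEuclideanLin_transpose_sq {m n : Type*} [Fintype m] [Fintype n]
    [DecidableEq m] [DecidableEq n] (A : Matrix m n ℝ) (y : EuclideanSpace ℝ m) :
    ‖toEuclideanLin Aᵀ y‖ ^ 2 = ⟪y, toEuclideanLin (A * Aᵀ) y⟫ := by
  rw [← real_inner_self_eq_norm_sq, ← conjTranspose_eq_transpose_of_trivial, toLpLin_mul_same,
    LinearMap.comp_apply, toEuclideanLin_conjTranspose_eq_adjoint, LinearMap.adjoint_inner_right,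
    real_inner_comm]

theorem Matrix.mul_norm_sq_le_norm_toEuclideanLin_transpose_sq {n : Type*} [Fintype n]
    [DecidableEq n] (K : Matrix n n ℝ) {σ : ℝ} (hσ : ∀ μ ∈ spectrum ℝ (Kᵀ * K), σ ≤ μ)
    (y : EuclideanSpace ℝ n) : σ * ‖y‖ ^ 2 ≤ ‖toEuclideanLin Kᵀ y‖ ^ 2 := by
  have hKKt : (K * Kᵀ).IsHermitian := by
    simpa only [conjTranspose_eq_transpose_of_trivial] using isHermitian_mul_conjTranspose_self K
  rw [norm_toEuclideanLin_transpose_sq]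
  exact hKKt.mul_norm_sq_le_inner_toEuclideanLin (by rwa [spectrum_mul_comm]) y

theorem dual_variable_bound_general (n : ℕ) (f : EuclideanSpace ℝ (Fin n) → ℝ) (L : ℝ) (hL0 : 0 ≤ L)
    (hLip : LipschitzWith (Real.toNNReal L) (fun x => gradient f x))
    (K : Matrix (Fin n) (Fin n) ℝ) (hH : (Kᵀ * K).IsHermitian) (σ : ℝ)
    (hσ : σ = ⨅ i, hH.eigenvalues i) (hσpos : 0 < σ)
    (α α' lam lam' : EuclideanSpace ℝ (Fin n))
    (hstat : -gradient f α = Matrix.toEuclideanLin Kᵀ lam)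
    (hstat' : -gradient f α' = Matrix.toEuclideanLin Kᵀ lam') :
    ‖lam - lam'‖ ^ 2 ≤ (L ^ 2 / σ) * ‖α - α'‖ ^ 2 := by
  have hspec : ∀ μ ∈ spectrum ℝ (Kᵀ * K), σ ≤ μ := by
    rw [hH.spectrum_real_eq_range_eigenvalues, hσ]
    rintro _ ⟨i, rfl⟩
    exact ciInf_le (Set.finite_range _).bddBelow i
  have hdual : toEuclideanLin Kᵀ (lam - lam') = gradient f α' - gradient f α := by
    rw [map_sub, ← hstat, ← hstat']
    abel
  have hgrad : ‖gradient f α' - gradient f α‖ ≤ L * ‖α - α'‖ := by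
    simpa only [Real.coe_toNNReal L hL0, norm_sub_rev α'] using hLip.norm_sub_le α' α
  have key : σ * ‖lam - lam'‖ ^ 2 ≤ L ^ 2 * ‖α - α'‖ ^ 2 :=
    calc σ * ‖lam - lam'‖ ^ 2 ≤ ‖toEuclideanLin Kᵀ (lam - lam')‖ ^ 2 :=
          K.mul_norm_sq_le_norm_toEuclideanLin_transpose_sq hspec _
      _ ≤ (L * ‖α - α'‖) ^ 2 := by rw [hdual]; gcongr
      _ = L ^ 2 * ‖α - α'‖ ^ 2 := by ring
  rw [div_mul_eq_mul_div, le_div_iff₀ hσpos]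
  linarith

/-- Dual iterates satisfying the stationarity relation `-∇f = Kᵀλ` satisfy
`‖λ - λ'‖² ≤ (L²/σ)‖α - α'‖²`. -/
theorem dual_variable_bound (n : ℕ) (hn : 0 < n) (f : EuclideanSpace ℝ (Fin n) → ℝ) (L : ℝ)
    (hL0 : 0 ≤ L) (hf : Differentiable ℝ f)
    (hLip : LipschitzWith (Real.toNNReal L) (fun x => gradient f x))
    (K : Matrix (Fin n) (Fin n) ℝ) (hH : (Kᵀ * K).IsHermitian) (σ : ℝ)
    (hσ : σ = ⨅ i, hH.eigenvalues i) (hσpos : 0 < σ)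
    (α α' lam lam' : EuclideanSpace ℝ (Fin n))
    (hstat : -gradient f α = Matrix.toEuclideanLin Kᵀ lam)
    (hstat' : -gradient f α' = Matrix.toEuclideanLin Kᵀ lam') :
    ‖lam - lam'‖ ^ 2 ≤ (L ^ 2 / σ) * ‖α - α'‖ ^ 2 :=
  dual_variable_bound_general n f L hL0 hLip K hH σ hσ hσpos α α' lam lam' hstat hstat'
end

section
/- Let f : ℝ^n → ℝ be L-smooth and bounded below, K ∈ ℝ^{n×n} with σ_min(KᵀK) = σ > 0, and ρ > L/σ. Suppose α, β, λ ∈ ℝ^n satisfy -∇f(α) = Kᵀλ, and let α' satisfy Kα' = β. Then f(α) + ⟨λ, Kα - β⟩ + (ρ/2)‖Kα - β‖² ≥ f(α') + ((ρσ - L)/(2σ))‖Kα - β‖² ≥ f(α'). -/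
open Matrix RealInnerProductSpace

section aux

variable {E : Type*} [NormedAddCommGroup E] [InnerProductSpace ℝ E] [CompleteSpace E]

lemma descent_lemma (f : E → ℝ) (L : ℝ) (hL : 0 ≤ L) (hf : Differentiable ℝ f)
    (hLip : LipschitzWith (Real.toNNReal L) (fun x => gradient f x)) (x y : E) :
    f y ≤ f x + ⟪gradient f x, y - x⟫ + L / 2 * ‖y - x‖ ^ 2 := by
  set v := y - x with hv
  have hc : ∀ t : ℝ, HasDerivAt (fun t : ℝ => x + t • v) v t := fun t => by
    simpa using ((hasDerivAt_id t).smul_const v).const_add x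
  set g : ℝ → ℝ := fun t => f (x + t • v) - t * ⟪gradient f x, v⟫ - L / 2 * t ^ 2 * ‖v‖ ^ 2
    with hg_def
  have hg : ∀ t : ℝ, HasDerivAt g
      (⟪gradient f (x + t • v), v⟫ - ⟪gradient f x, v⟫ - L * t * ‖v‖ ^ 2) t := by
    intro t
    have h1 : HasDerivAt (fun t : ℝ => f (x + t • v)) ⟪gradient f (x + t • v), v⟫ t := by
      have := ((hf (x + t • v)).hasGradientAt.hasFDerivAt).comp_hasDerivAt t (hc t)
      simpa [InnerProductSpace.toDual_apply_apply, Function.comp_def] using this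
    have h2 : HasDerivAt (fun t : ℝ => t * ⟪gradient f x, v⟫) ⟪gradient f x, v⟫ t :=
      hasDerivAt_mul_const _
    have h3 : HasDerivAt (fun t : ℝ => L / 2 * t ^ 2 * ‖v‖ ^ 2) (L * t * ‖v‖ ^ 2) t := by
      have := ((hasDerivAt_pow 2 t).const_mul (L / 2)).mul_const (‖v‖ ^ 2)
      exact this.congr_deriv (by ring)
    exact (h1.sub h2).sub h3
  have key : AntitoneOn g (Set.Icc (0 : ℝ) 1) := by
    apply antitoneOn_of_deriv_nonpos (convex_Icc 0 1)
    · have hdiff : Differentiable ℝ g := fun t => (hg t).differentiableAt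
      exact hdiff.continuous.continuousOn
    · have hdiff : Differentiable ℝ g := fun t => (hg t).differentiableAt
      exact hdiff.differentiableOn
    · intro t ht
      rw [interior_Icc] at ht
      rw [(hg t).deriv]
      have hbound : ⟪gradient f (x + t • v) - gradient f x, v⟫ ≤ L * t * ‖v‖ ^ 2 := by
        calc ⟪gradient f (x + t • v) - gradient f x, v⟫
            ≤ ‖gradient f (x + t • v) - gradient f x‖ * ‖v‖ := real_inner_le_norm _ _
          _ ≤ (L * (t * ‖v‖)) * ‖v‖ := by
              apply mul_le_mul_of_nonneg_right _ (norm_nonneg v)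
              have := hLip.dist_le_mul (x + t • v) x
              simp only [dist_eq_norm, Real.coe_toNNReal _ hL] at this
              calc ‖gradient f (x + t • v) - gradient f x‖ ≤ L * ‖(x + t • v) - x‖ := this
                _ = L * (t * ‖v‖) := by
                    rw [add_sub_cancel_left, norm_smul, Real.norm_eq_abs,
                      abs_of_pos ht.1]
          _ = L * t * ‖v‖ ^ 2 := by ring
      rw [inner_sub_left] at hbound
      linarith
  have h01 := key (Set.left_mem_Icc.2 zero_le_one) (Set.right_mem_Icc.2 zero_le_one) zero_le_one
  have hg0 : g 0 = f x := by simp [hg_def]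
  have hg1 : g 1 = f y - ⟪gradient f x, v⟫ - L / 2 * ‖v‖ ^ 2 := by
    simp [hg_def, hv]
  rw [hg0, hg1] at h01
  linarith

end aux

lemma rayleigh_lb {n : ℕ} (A : Matrix (Fin n) (Fin n) ℝ) (hA : A.IsHermitian)
    (x : EuclideanSpace ℝ (Fin n)) :
    (⨅ i, hA.eigenvalues i) * ‖x‖ ^ 2 ≤ ⟪x, Matrix.toEuclideanLin A x⟫ := by
  rcases Nat.eq_zero_or_pos n with hn | hn
  · subst hn
    have hx : x = 0 := Subsingleton.elim _ _
    simp [hx, Real.iInf_of_isEmpty]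
  set T := Matrix.toEuclideanLin A with hT_def
  have hT : T.IsSymmetric := Matrix.isHermitian_iff_isSymmetric.1 hA
  set b := hT.eigenvectorBasis finrank_euclideanSpace with hb_def
  have hrepr : ∀ (u w : EuclideanSpace ℝ (Fin n)),
      ⟪u, w⟫ = ∑ i, b.repr u i * b.repr w i := by
    intro u w
    calc ⟪u, w⟫ = ⟪b.repr u, b.repr w⟫ := (b.repr.inner_map_map u w).symm
      _ = ∑ i, b.repr u i * b.repr w i := by
          simp only [PiLp.inner_apply, RCLike.inner_apply, starRingEnd_apply, star_trivial]
          exact Finset.sum_congr rfl (fun _ _ => mul_comm _ _)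
  have heig : ∀ j, b.repr (T x) j = hT.eigenvalues finrank_euclideanSpace j * b.repr x j :=
    fun j => hT.eigenvectorBasis_apply_self_apply finrank_euclideanSpace x j
  have hle : ∀ j, (⨅ i, hA.eigenvalues i) ≤ hT.eigenvalues finrank_euclideanSpace j := by
    intro j
    have : hT.eigenvalues finrank_euclideanSpace j
        = hA.eigenvalues ((Fintype.equivOfCardEq (Fintype.card_fin _)) j) := by
      simp [Matrix.IsHermitian.eigenvalues, Matrix.IsHermitian.eigenvalues₀]
    rw [this]
    exact ciInf_le (Finite.bddBelow_range _) _
  have hnorm : ‖x‖ ^ 2 = ∑ i, (b.repr x i) ^ 2 := by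
    rw [← real_inner_self_eq_norm_sq, hrepr]
    simp [sq]
  rw [hrepr, hnorm, Finset.mul_sum]
  apply Finset.sum_le_sum
  intro j _
  rw [heig j]
  have h2 : (⨅ i, hA.eigenvalues i) * (b.repr x j) ^ 2
      ≤ hT.eigenvalues finrank_euclideanSpace j * (b.repr x j) ^ 2 :=
    mul_le_mul_of_nonneg_right (hle j) (sq_nonneg _)
  nlinarith [h2]

/-- Lower bound of the augmented Lagrangian terms at a stationary `α`:
`f(α) + ⟨λ, Kα - β⟩ + (ρ/2)‖Kα - β‖² ≥ f(α') + ((ρσ - L)/(2σ))‖Kα - β‖² ≥ f(α')`. -/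
theorem augmented_lagrangian_lower_bound (n : ℕ) (hn : 0 < n)
    (f : EuclideanSpace ℝ (Fin n) → ℝ) (L : ℝ) (hL0 : 0 ≤ L)
    (hf : Differentiable ℝ f)
    (hLip : LipschitzWith (Real.toNNReal L) (fun x => gradient f x))
    (hbdd : BddBelow (Set.range f))
    (K : Matrix (Fin n) (Fin n) ℝ) (hH : (Kᵀ * K).IsHermitian) (σ : ℝ)
    (hσ : σ = ⨅ i, hH.eigenvalues i) (hσpos : 0 < σ)
    (ρ : ℝ) (hρ : ρ > L / σ)
    (α α' β lam : EuclideanSpace ℝ (Fin n))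
    (hstat : -gradient f α = Matrix.toEuclideanLin Kᵀ lam)
    (hfeas : Matrix.toEuclideanLin K α' = β) :
    f α + ⟪lam, Matrix.toEuclideanLin K α - β⟫
        + (ρ / 2) * ‖Matrix.toEuclideanLin K α - β‖ ^ 2
      ≥ f α' + ((ρ * σ - L) / (2 * σ)) * ‖Matrix.toEuclideanLin K α - β‖ ^ 2
    ∧ f α' + ((ρ * σ - L) / (2 * σ)) * ‖Matrix.toEuclideanLin K α - β‖ ^ 2 ≥ f α' := by
  set TK := Matrix.toEuclideanLin K with hTK
  set r := TK α - β with hr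
  set v : EuclideanSpace ℝ (Fin n) := α' - α with hv
  have hadj : Matrix.toEuclideanLin Kᵀ = LinearMap.adjoint TK := by
    rw [hTK, ← Matrix.toEuclideanLin_conjTranspose_eq_adjoint,
      Matrix.conjTranspose_eq_transpose_of_trivial]
  have hKv : TK v = -r := by
    simp only [hv, hr, map_sub, hfeas]
    abel
  -- descent lemma
  have hdesc := descent_lemma f L hL0 hf hLip α α'
  have hinner : ⟪gradient f α, α' - α⟫ = ⟪lam, r⟫ := by
    have h1 : gradient f α = -(Matrix.toEuclideanLin Kᵀ lam) := by
      rw [← hstat]; simp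
    rw [h1, hadj, inner_neg_left, LinearMap.adjoint_inner_left, ← hv, hKv, inner_neg_right,
      neg_neg]
  -- Rayleigh bound
  have hray : σ * ‖v‖ ^ 2 ≤ ‖r‖ ^ 2 := by
    have h1 := rayleigh_lb (Kᵀ * K) hH v
    have h2 : Matrix.toEuclideanLin (Kᵀ * K) v = Matrix.toEuclideanLin Kᵀ (TK v) := by
      simp [hTK, Matrix.toEuclideanLin_apply, Matrix.mulVec_mulVec]
    have h3 : ⟪v, Matrix.toEuclideanLin (Kᵀ * K) v⟫ = ‖r‖ ^ 2 := by
      rw [h2, hadj, real_inner_comm, LinearMap.adjoint_inner_left, hKv,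
        inner_neg_left, inner_neg_right, neg_neg, real_inner_self_eq_norm_sq]
    rw [← hσ] at h1
    linarith [h1, h3.symm ▸ h1]
  have hvr : ‖v‖ ^ 2 ≤ ‖r‖ ^ 2 / σ := by
    rw [le_div_iff₀ hσpos]; linarith [hray]
  have hρσ : L < ρ * σ := by
    have := (div_lt_iff₀ hσpos).1 hρ
    linarith
  have hL2 : L / 2 * ‖v‖ ^ 2 ≤ L / (2 * σ) * ‖r‖ ^ 2 := by
    rcases eq_or_lt_of_le hL0 with hL | hL
    · simp [← hL]
    · have := mul_le_mul_of_nonneg_left hvr (le_of_lt (by positivity : (0:ℝ) < L / 2))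
      calc L / 2 * ‖v‖ ^ 2 ≤ L / 2 * (‖r‖ ^ 2 / σ) := this
        _ = L / (2 * σ) * ‖r‖ ^ 2 := by field_simp
  have hα'v : α' - α = v := rfl
  rw [hα'v] at hdesc
  rw [hinner] at hdesc
  have hcoef : (ρ * σ - L) / (2 * σ) = ρ / 2 - L / (2 * σ) := by
    field_simp
  have hc : 0 ≤ (ρ * σ - L) / (2 * σ) :=
    div_nonneg (by linarith) (by linarith)
  constructor
  · rw [ge_iff_le, hcoef]
    have hexp : (ρ / 2 - L / (2 * σ)) * ‖r‖ ^ 2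
        = ρ / 2 * ‖r‖ ^ 2 - L / (2 * σ) * ‖r‖ ^ 2 := by ring
    rw [hexp]
    linarith [hdesc, hL2]
  · have := mul_nonneg hc (sq_nonneg ‖r‖)
    linarith
end

section
/- Let g(W) = h(‖W‖_F) with h : [0,∞) → ℝ strictly monotonically increasing, and let Φ ∈ ℝ^{d'×n}. Then any minimizer W of W ↦ ∑_{i=1}^n ℓ_i((WΦ)_i column-wise evaluations) + g(W) over ℝ^{k×d'} satisfies that Wᵀ lies in the column space of Φ, i.e. Wᵀ = Φα for some α ∈ ℝ^{n×k}. -/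
/-!
Project every row of `W` orthogonally onto the column space `K` of `Φ`. The entries of `WΦ` are
inner products of rows of `W` with columns of `Φ`, so they do not change, while by Pythagoras the
Frobenius norm does not increase, and strictly decreases unless every row already lies in `K`.
Minimality of `W` and strict monotonicity of `h` exclude the strict decrease, and rows in `K`
mean exactly `Wᵀ = Φα`.
-/

open Matrix

noncomputable def frobNorm {k d : ℕ} (W : Matrix (Fin k) (Fin d) ℝ) : ℝ :=
  Real.sqrt (∑ i, ∑ j, (W i j) ^ 2)

open Set WithLp

namespace Submodule

variable {E ι : Type*} [NormedAddCommGroup E] [InnerProductSpace ℝ E] [Fintype ι]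
  (K : Submodule ℝ E) [K.HasOrthogonalProjection]

theorem forall_mem_of_forall_le_add_sqrt_sum_norm_sq (G : (ι → E) → ℝ) {h : ℝ → ℝ}
    (hh : StrictMonoOn h (Ici 0)) {r : ι → E}
    (hG : G (fun i => K.starProjection (r i)) ≤ G r)
    (hmin : ∀ s, G r + h √(∑ i, ‖r i‖ ^ 2) ≤ G s + h √(∑ i, ‖s i‖ ^ 2)) :
    ∀ i, r i ∈ K := by
  set p := fun i => K.starProjection (r i)
  have hle : ∀ i, ‖p i‖ ^ 2 ≤ ‖r i‖ ^ 2 := fun i =>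
    pow_le_pow_left₀ (norm_nonneg _) (K.norm_starProjection_apply_le _) 2
  have hge : ∑ i, ‖r i‖ ^ 2 ≤ ∑ i, ‖p i‖ ^ 2 := by
    have : h √(∑ i, ‖r i‖ ^ 2) ≤ h √(∑ i, ‖p i‖ ^ 2) := by linarith [hmin p]
    rwa [hh.le_iff_le (Real.sqrt_nonneg _) (Real.sqrt_nonneg _),
      Real.sqrt_le_sqrt_iff (by positivity)] at this
  have heq := (Finset.sum_eq_sum_iff_of_le fun i _ => hle i).mp
    (le_antisymm (Finset.sum_le_sum fun i _ => hle i) hge)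
  intro i
  rw [K.mem_iff_norm_starProjection]
  exact (pow_left_inj₀ (norm_nonneg _) (norm_nonneg _) two_ne_zero).mp (heq i (Finset.mem_univ i))

end Submodule

namespace Matrix

variable {l m n : Type*} [Fintype n] [DecidableEq n]

theorem exists_transpose_eq_mul_of_mem_range {𝕜 : Type*} [RCLike 𝕜] (W : Matrix l m 𝕜)
    (Φ : Matrix m n 𝕜) (hW : ∀ i, toLp 2 (W i) ∈ LinearMap.range Φ.toEuclideanLin) :
    ∃ α : Matrix n l 𝕜, Wᵀ = Φ * α := by
  choose a ha using hW
  refine ⟨of fun t i => a i t, ?_⟩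
  ext j i
  have hij := congrArg (fun v : EuclideanSpace 𝕜 m => v j) (ha i)
  simp only [toLpLin_apply, PiLp.toLp_apply] at hij
  rw [transpose_apply, ← hij, mul_apply]
  rfl

variable [Fintype m]

omit [Fintype n] [DecidableEq n] in
theorem mul_apply_eq_inner_col (W : Matrix l m ℝ) (Φ : Matrix m n ℝ) (i : l) (t : n) :
    (W * Φ) i t = inner ℝ (toLp 2 (Φ.col t)) (toLp 2 (W i)) := by
  simp [EuclideanSpace.inner_toLp_toLp, mul_apply', col_apply']

theorem mul_eq_mul_of_starProjection_range {W W' : Matrix l m ℝ} {Φ : Matrix m n ℝ}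
    (hW' : ∀ i, toLp 2 (W' i) =
      (LinearMap.range Φ.toEuclideanLin).starProjection (toLp 2 (W i))) :
    W' * Φ = W * Φ := by
  ext i t
  have hcol : toLp 2 (Φ.col t) ∈ LinearMap.range Φ.toEuclideanLin :=
    ⟨EuclideanSpace.single t 1, by simp [toLpLin_apply]⟩
  rw [mul_apply_eq_inner_col, mul_apply_eq_inner_col, hW',
    ← Submodule.inner_starProjection_left_eq_right, Submodule.starProjection_eq_self_iff.mpr hcol]

end Matrix

theorem frobNorm_of_eq_sqrt_sum_norm_sq {k d : ℕ} (s : Fin k → EuclideanSpace ℝ (Fin d)) :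
    frobNorm (of fun i j => s i j) = √(∑ i, ‖s i‖ ^ 2) := by
  simp [frobNorm, EuclideanSpace.real_norm_sq_eq]

/-- Representer theorem: any minimizer of `W ↦ ∑ i, ℓ_i((WΦ) column i) + h(‖W‖_F)`
with `h` strictly increasing satisfies `Wᵀ = Φα` for some `α`. -/
theorem representer_theorem (k d' n : ℕ) (Φ : Matrix (Fin d') (Fin n) ℝ)
    (ℓ : Fin n → (Fin k → ℝ) → ℝ) (h : ℝ → ℝ) (hmono : StrictMonoOn h (Set.Ici 0))
    (W : Matrix (Fin k) (Fin d') ℝ)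
    (hmin : ∀ W' : Matrix (Fin k) (Fin d') ℝ,
      (∑ i, ℓ i (fun j => (W * Φ) j i)) + h (frobNorm W)
        ≤ (∑ i, ℓ i (fun j => (W' * Φ) j i)) + h (frobNorm W')) :
    ∃ α : Matrix (Fin n) (Fin k) ℝ, Wᵀ = Φ * α := by
  let K := LinearMap.range Φ.toEuclideanLin
  let ofRows (s : Fin k → EuclideanSpace ℝ (Fin d')) : Matrix (Fin k) (Fin d') ℝ :=
    of fun i j => s i j
  let L (M : Matrix (Fin k) (Fin n) ℝ) : ℝ := ∑ i, ℓ i fun j => M j i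
  have hW : frobNorm W = √(∑ i, ‖toLp 2 (W i)‖ ^ 2) :=
    frobNorm_of_eq_sqrt_sum_norm_sq fun i => toLp 2 (W i)
  have hrow : ∀ i, toLp 2 (W i) ∈ K :=
    K.forall_mem_of_forall_le_add_sqrt_sum_norm_sq (fun s => L (ofRows s * Φ)) hmono
      (congrArg L (mul_eq_mul_of_starProjection_range fun i => rfl)).le
      fun s => by
        rw [← hW, ← frobNorm_of_eq_sqrt_sum_norm_sq]
        exact hmin (ofRows s)
  exact exists_transpose_eq_mul_of_mem_range W Φ hrow
end

section
/- Let f : ℝ^n → ℝ be differentiable with L-Lipschitz gradient and m-semiconvex, K ∈ ℝ^{n×n} with σ = σ_min(KᵀK) > 0, ρ > 0, and fix β, λ ∈ ℝ^n. If α⁺ minimizes α ↦ f(α) + ⟨λ, Kα - β⟩ + (ρ/2)‖Kα - β‖², then for any α: f(α⁺) + ⟨λ, Kα⁺ - β⟩ + (ρ/2)‖Kα⁺ - β‖² - (f(α) + ⟨λ, Kα - β⟩ + (ρ/2)‖Kα - β‖²) ≤ ((m - ρσ)/2)‖α⁺ - α‖². -/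
/-!
The objective `α ↦ f α + ⟪λ, Kα - β⟫ + (ρ/2)‖Kα - β‖²` is `(ρσ - m)`-strongly convex (in Mathlib's
sense, where the modulus may be negative): semiconvexity says `f` is `(-m)`-strongly convex, and
`y ↦ ⟪λ, y⟫ + (ρ/2)‖y‖²` is `ρ`-strongly convex, which becomes modulus `ρσ` after substituting
`y = Kα - β` because `σ‖z‖² ≤ ⟪z, KᵀK z⟫ = ‖Kz‖²`. A `μ`-strongly convex function grows at least
like `(μ/2)‖α - α⁺‖²` away from a minimizer `α⁺`: compare `α⁺` with the points of the segment
`[α⁺, α]` and let them tend to `α⁺`.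
-/

open Matrix RealInnerProductSpace
open Filter Set Topology

section NormedSpace

variable {E F : Type*} [NormedAddCommGroup E] [NormedSpace ℝ E]
  [NormedAddCommGroup F] [NormedSpace ℝ F]

lemma StrongConvexOn.add {s : Set E} {m n : ℝ} {f g : E → ℝ} (hf : StrongConvexOn s m f)
    (hg : StrongConvexOn s n g) : StrongConvexOn s (m + n) (f + g) := by
  have hφ : (fun r : ℝ => m / 2 * r ^ 2) + (fun r => n / 2 * r ^ 2)
      = fun r => (m + n) / 2 * r ^ 2 := by
    funext r
    simp only [Pi.add_apply]
    ring
  simpa only [StrongConvexOn, hφ] using UniformConvexOn.add hf hg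

lemma StrongConvexOn.comp_linearMap_sub {f : F → ℝ} {m σ : ℝ}
    (hf : StrongConvexOn univ m f) (hm : 0 ≤ m) (T : E →ₗ[ℝ] F)
    (hT : ∀ z, σ * ‖z‖ ^ 2 ≤ ‖T z‖ ^ 2) (b : F) :
    StrongConvexOn univ (m * σ) (fun x => f (T x - b)) := by
  refine ⟨convex_univ, fun x _ y _ a c ha hc hac => ?_⟩
  have hcomb : T (a • x + c • y) - b = a • (T x - b) + c • (T y - b) := by
    obtain rfl : c = 1 - a := by linarith
    rw [map_add, map_smul, map_smul]
    module
  have hdiff : (T x - b) - (T y - b) = T (x - y) := by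
    rw [map_sub]
    abel
  have hmod : a * c * (m / 2 * (σ * ‖x - y‖ ^ 2)) ≤ a * c * (m / 2 * ‖T (x - y)‖ ^ 2) := by
    gcongr
    exact hT _
  have hconv := hf.2 (mem_univ (T x - b)) (mem_univ (T y - b)) ha hc hac
  rw [← hcomb, hdiff] at hconv
  simp only [smul_eq_mul] at hconv ⊢
  linarith

lemma StrongConvexOn.le_sub_of_isMinOn {s : Set E} {μ : ℝ} {g : E → ℝ} {x₀ y : E}
    (hg : StrongConvexOn s μ g) (hmin : IsMinOn g s x₀) (hx₀ : x₀ ∈ s) (hy : y ∈ s) :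
    μ / 2 * ‖y - x₀‖ ^ 2 ≤ g y - g x₀ := by
  have hsegment : ∀ t ∈ Ioo (0 : ℝ) 1, (1 - t) * (μ / 2 * ‖y - x₀‖ ^ 2) ≤ g y - g x₀ := by
    rintro t ⟨ht0, ht1⟩
    have hconv := hg.2 hx₀ hy (sub_nonneg.2 ht1.le) ht0.le (sub_add_cancel 1 t)
    have hle : g x₀ ≤ g _ := hmin (hg.1 hx₀ hy (sub_nonneg.2 ht1.le) ht0.le (sub_add_cancel 1 t))
    rw [norm_sub_rev] at hconv
    simp only [smul_eq_mul] at hconv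
    have : t * ((1 - t) * (μ / 2 * ‖y - x₀‖ ^ 2)) ≤ t * (g y - g x₀) := by linarith
    exact le_of_mul_le_mul_left this ht0
  have hlim : Tendsto (fun t : ℝ => (1 - t) * (μ / 2 * ‖y - x₀‖ ^ 2)) (𝓝[>] 0)
      (𝓝 (μ / 2 * ‖y - x₀‖ ^ 2)) := by
    have := ((continuous_const.sub continuous_id).mul continuous_const).tendsto (0 : ℝ)
      (f := fun t : ℝ => (1 - t) * (μ / 2 * ‖y - x₀‖ ^ 2))
    simpa using this.mono_left nhdsWithin_le_nhds
  exact le_of_tendsto hlim (eventually_of_mem (Ioo_mem_nhdsGT one_pos) hsegment)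

end NormedSpace

lemma strongConvexOn_mul_norm_sq {E : Type*} [NormedAddCommGroup E] [InnerProductSpace ℝ E]
    (m : ℝ) : StrongConvexOn univ m (fun x : E => m / 2 * ‖x‖ ^ 2) :=
  strongConvexOn_iff_convex.2 (by simpa using convexOn_const (0 : ℝ) convex_univ)

lemma Matrix.IsHermitian.iInf_eigenvalues_mul_norm_sq_le_inner {ι : Type*} [Fintype ι]
    [DecidableEq ι] {A : Matrix ι ι ℝ} (hA : A.IsHermitian) (z : EuclideanSpace ℝ ι) :
    (⨅ i, hA.eigenvalues i) * ‖z‖ ^ 2 ≤ ⟪z, toEuclideanLin A z⟫ := by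
  set b := hA.eigenvectorBasis
  have heig : ∀ j, toEuclideanLin A (b j) = hA.eigenvalues j • b j := fun j => by
    ext i
    simpa using congrFun (hA.mulVec_eigenvectorBasis j) i
  have hexpand : ⟪z, toEuclideanLin A z⟫ = ∑ j, hA.eigenvalues j * ⟪b j, z⟫ ^ 2 := by
    rw [← b.sum_inner_mul_inner]
    refine Finset.sum_congr rfl fun j _ => ?_
    rw [← isSymmetric_toEuclideanLin_iff.2 hA, heig, real_inner_smul_left, real_inner_comm z]
    ring
  rw [hexpand, ← b.sum_sq_inner_right, Finset.mul_sum]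
  gcongr with j
  exact ciInf_le (Finite.bddBelow_range _) j

lemma Matrix.inner_toEuclideanLin_transpose_mul_self {κ ι : Type*} [Fintype κ] [DecidableEq κ]
    [Fintype ι] [DecidableEq ι] (K : Matrix κ ι ℝ) (z : EuclideanSpace ℝ ι) :
    ⟪z, toEuclideanLin (Kᵀ * K) z⟫ = ‖toEuclideanLin K z‖ ^ 2 := by
  rw [← conjTranspose_eq_transpose_of_trivial, toLpLin_mul_same,
    toEuclideanLin_conjTranspose_eq_adjoint, LinearMap.comp_apply,
    LinearMap.adjoint_inner_right, real_inner_self_eq_norm_sq]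

theorem alpha_block_descent_general (n : ℕ) (f : EuclideanSpace ℝ (Fin n) → ℝ)
    (m : ℝ)
    (hsc : ConvexOn ℝ Set.univ (fun x => f x + (m / 2) * ‖x‖ ^ 2))
    (K : Matrix (Fin n) (Fin n) ℝ) (hH : (Kᵀ * K).IsHermitian) (σ : ℝ)
    (hσ : σ = ⨅ i, hH.eigenvalues i)
    (ρ : ℝ) (hρ : 0 < ρ) (β lam : EuclideanSpace ℝ (Fin n))
    (αplus : EuclideanSpace ℝ (Fin n))
    (hαplus : ∀ α : EuclideanSpace ℝ (Fin n),
      f αplus + ⟪lam, Matrix.toEuclideanLin K αplus - β⟫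
          + (ρ / 2) * ‖Matrix.toEuclideanLin K αplus - β‖ ^ 2
        ≤ f α + ⟪lam, Matrix.toEuclideanLin K α - β⟫
          + (ρ / 2) * ‖Matrix.toEuclideanLin K α - β‖ ^ 2) :
    ∀ α : EuclideanSpace ℝ (Fin n),
      f αplus + ⟪lam, Matrix.toEuclideanLin K αplus - β⟫
          + (ρ / 2) * ‖Matrix.toEuclideanLin K αplus - β‖ ^ 2
        - (f α + ⟪lam, Matrix.toEuclideanLin K α - β⟫
          + (ρ / 2) * ‖Matrix.toEuclideanLin K α - β‖ ^ 2)
      ≤ ((m - ρ * σ) / 2) * ‖αplus - α‖ ^ 2 := by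
  intro α
  have hK : ∀ z, σ * ‖z‖ ^ 2 ≤ ‖toEuclideanLin K z‖ ^ 2 := fun z =>
    hσ ▸ (hH.iInf_eigenvalues_mul_norm_sq_le_inner z).trans_eq
      (K.inner_toEuclideanLin_transpose_mul_self z)
  have hf : StrongConvexOn univ (-m) f :=
    strongConvexOn_iff_convex.2 (by simpa [neg_div] using hsc)
  have hlag : StrongConvexOn univ (0 + ρ)
      (fun y : EuclideanSpace ℝ (Fin n) => ⟪lam, y⟫ + ρ / 2 * ‖y‖ ^ 2) :=
    (strongConvexOn_zero.2 ((innerₛₗ ℝ lam).convexOn convex_univ)).add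
      (strongConvexOn_mul_norm_sq ρ)
  have hobj := hf.add (hlag.comp_linearMap_sub (by linarith) (toEuclideanLin K) hK β)
  have hgrowth := hobj.le_sub_of_isMinOn (x₀ := αplus) (y := α)
    (isMinOn_univ_iff.2 fun x => by simpa only [Pi.add_apply, add_assoc] using hαplus x)
    trivial trivial
  simp only [Pi.add_apply, norm_sub_rev α] at hgrowth
  linarith

/-- Descent estimate for the `α`-block of the discrete-continuous augmented Lagrangian:
if `α⁺` minimizes `α ↦ f(α) + ⟨λ, Kα - β⟩ + (ρ/2)‖Kα - β‖²`, then for any `α` the decrease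
is at most `((m - ρσ)/2)‖α⁺ - α‖²`. -/
theorem alpha_block_descent (n : ℕ) (hn : 0 < n) (f : EuclideanSpace ℝ (Fin n) → ℝ)
    (L m : ℝ) (hL0 : 0 ≤ L) (hm : 0 < m) (hf : Differentiable ℝ f)
    (hLip : LipschitzWith (Real.toNNReal L) (fun x => gradient f x))
    (hsc : ConvexOn ℝ Set.univ (fun x => f x + (m / 2) * ‖x‖ ^ 2))
    (K : Matrix (Fin n) (Fin n) ℝ) (hH : (Kᵀ * K).IsHermitian) (σ : ℝ)
    (hσ : σ = ⨅ i, hH.eigenvalues i) (hσpos : 0 < σ)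
    (ρ : ℝ) (hρ : 0 < ρ) (β lam : EuclideanSpace ℝ (Fin n))
    (αplus : EuclideanSpace ℝ (Fin n))
    (hαplus : ∀ α : EuclideanSpace ℝ (Fin n),
      f αplus + ⟪lam, Matrix.toEuclideanLin K αplus - β⟫
          + (ρ / 2) * ‖Matrix.toEuclideanLin K αplus - β‖ ^ 2
        ≤ f α + ⟪lam, Matrix.toEuclideanLin K α - β⟫
          + (ρ / 2) * ‖Matrix.toEuclideanLin K α - β‖ ^ 2) :
    ∀ α : EuclideanSpace ℝ (Fin n),
      f αplus + ⟪lam, Matrix.toEuclideanLin K αplus - β⟫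
          + (ρ / 2) * ‖Matrix.toEuclideanLin K αplus - β‖ ^ 2
        - (f α + ⟪lam, Matrix.toEuclideanLin K α - β⟫
          + (ρ / 2) * ‖Matrix.toEuclideanLin K α - β‖ ^ 2)
      ≤ ((m - ρ * σ) / 2) * ‖αplus - α‖ ^ 2 :=
  alpha_block_descent_general n f m hsc K hH σ hσ ρ hρ β lam αplus hαplus
end
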